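/- arXiv:1902.08923 — 6 statements merged into one kernel-verified Lean document; each statement's English description precedes it below -/
import Mathlib

section
/- If I is a proper ideal in the ring B₁(X) of real-valued Baire one functions on a topological space X, then the family Z_B[I] = {Z(f) : f ∈ I} of zero sets of members of I is a Z_B-filter on X, i.e., it does not contain the empty set, is closed under finite intersections, and contains every zero set of a Baire one function that contains some member of the family. -/
open Filter Topology

/-- A function `f : X → ℝ` is Baire one if it is a pointwise limit of a
sequence of continuous functions. -/
def IsBaireOne {X : Type*} [TopologicalSpace X] (f : X → ℝ) : Prop :=
  ∃ F : ℕ → C(X, ℝ), ∀ x, Tendsto (fun n => F n x) atTop (𝓝 (f x))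

/-- The ring `B₁(X)` of real valued Baire one functions on `X`, as a subring
of the ring of all functions `X → ℝ`. -/
def B1 (X : Type*) [TopologicalSpace X] : Subring (X → ℝ) where
  carrier := {f | IsBaireOne f}
  zero_mem' := ⟨fun _ => 0, fun x => by simpa using tendsto_const_nhds⟩
  one_mem' := ⟨fun _ => 1, fun x => by simpa using tendsto_const_nhds⟩
  add_mem' := by
    rintro f g ⟨F, hF⟩ ⟨G, hG⟩
    exact ⟨fun n => F n + G n, fun x => by simpa using (hF x).add (hG x)⟩
  mul_mem' := by
    rintro f g ⟨F, hF⟩ ⟨G, hG⟩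
    exact ⟨fun n => F n * G n, fun x => by simpa using (hF x).mul (hG x)⟩
  neg_mem' := by
    rintro f ⟨F, hF⟩
    exact ⟨fun n => -F n, fun x => by simpa using (hF x).neg⟩

variable {X : Type*} [TopologicalSpace X]

/-- The constant function with value `r`, as an element of `B₁(X)`. -/
def bconst (X : Type*) [TopologicalSpace X] (r : ℝ) : B1 X :=
  ⟨fun _ => r, ⟨fun _ => ContinuousMap.const X r, fun x => by simpa using tendsto_const_nhds⟩⟩

theorem babs_mem (f : B1 X) : (fun x => |(f : X → ℝ) x|) ∈ B1 X := by
  obtain ⟨F, hF⟩ := f.2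
  exact ⟨fun n => ⟨fun x => |F n x|, (F n).continuous.abs⟩, fun x => (hF x).abs⟩

/-- The absolute value `|f|` of a Baire one function. -/
def babs (f : B1 X) : B1 X := ⟨fun x => |(f : X → ℝ) x|, babs_mem f⟩

/-- The zero set `Z(f)` of `f ∈ B₁(X)`. -/
def zset (f : B1 X) : Set X := {x | (f : X → ℝ) x = 0}

/-- `Z(B₁(X))`, the family of all zero sets of Baire one functions on `X`. -/
def zsets (X : Type*) [TopologicalSpace X] : Set (Set X) := {Z | ∃ f : B1 X, zset f = Z}

/-- `Z_B[I] = {Z(f) : f ∈ I}` for an ideal `I` of `B₁(X)`. -/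
def zbi (I : Ideal (B1 X)) : Set (Set X) := {Z | ∃ f ∈ I, zset f = Z}

/-- A `Z_B`-filter on `X`: a nonempty family of zero sets of Baire one functions,
not containing `∅`, closed under finite intersections and upward closed in `Z(B₁(X))`. -/
def IsZBFilter (F : Set (Set X)) : Prop :=
  F.Nonempty ∧ F ⊆ zsets X ∧ ∅ ∉ F ∧
    (∀ Z₁ ∈ F, ∀ Z₂ ∈ F, Z₁ ∩ Z₂ ∈ F) ∧
    (∀ Z ∈ F, ∀ Z' ∈ zsets X, Z ⊆ Z' → Z' ∈ F)

/-- A `Z_B`-ultrafilter on `X`: a maximal `Z_B`-filter. -/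
def IsZBUltrafilter (U : Set (Set X)) : Prop :=
  IsZBFilter U ∧ ∀ F : Set (Set X), IsZBFilter F → U ⊆ F → F = U

/-- The finite intersection property: every nonempty finite subfamily has
nonempty intersection. -/
def FIP {X : Type*} (B : Set (Set X)) : Prop :=
  ∀ S : Finset (Set X), ↑S ⊆ B → S.Nonempty → (⋂₀ (S : Set (Set X))).Nonempty

/-- An ideal `I` of `B₁(X)` is a `Z_B`-ideal if `Z_B⁻¹[Z_B[I]] = I`. -/
def IsZBIdeal (I : Ideal (B1 X)) : Prop :=
  ∀ f : B1 X, zset f ∈ zbi I → f ∈ I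

/-- An ideal of `B₁(X)` is fixed if the zero sets of its members have a common point. -/
def FixedIdeal (I : Ideal (B1 X)) : Prop :=
  (⋂ f ∈ (I : Set (B1 X)), zset f).Nonempty

/-- A prime `Z_B`-filter. -/
def IsPrimeZBFilter (F : Set (Set X)) : Prop :=
  IsZBFilter F ∧ ∀ Z₁ ∈ zsets X, ∀ Z₂ ∈ zsets X, Z₁ ∪ Z₂ ∈ F → Z₁ ∈ F ∨ Z₂ ∈ F

/-- `M(f) ≥ 0` in the quotient `B₁(X)/M`: the coset contains a nonnegative function. -/
def QNonneg (M : Ideal (B1 X)) (a : B1 X ⧸ M) : Prop :=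
  ∃ g : B1 X, (∀ x, 0 ≤ (g : X → ℝ) x) ∧ Ideal.Quotient.mk M g = a

/-- `M(f) > 0` in the quotient `B₁(X)/M`. -/
def QPos (M : Ideal (B1 X)) (a : B1 X ⧸ M) : Prop := QNonneg M a ∧ a ≠ 0

/-- A maximal ideal `M` of `B₁(X)` is real if the canonical copy of `ℝ`
(via constant functions) is all of `B₁(X)/M`. -/
def RealIdeal (M : Ideal (B1 X)) : Prop :=
  Function.Surjective (fun r : ℝ => Ideal.Quotient.mk M (bconst X r))

/-- An `F_σ` subset: a countable union of closed sets. -/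
def IsFSigma {X : Type*} [TopologicalSpace X] (s : Set X) : Prop :=
  ∃ F : ℕ → Set X, (∀ n, IsClosed (F n)) ∧ s = ⋃ n, F n

/-!
A function with empty zero set is a unit of `B₁(X)`, so it cannot lie in the proper ideal `I`.
Closure under intersections and enlargements comes from the identities
`Z(f² + g²) = Z(f) ∩ Z(g)` and `Z(g f) = Z(g) ∪ Z(f)`, both realised by members of `I`.
-/

theorem IsBaireOne.inv {f : X → ℝ} (hf : IsBaireOne f) (h0 : ∀ x, f x ≠ 0) :
    IsBaireOne f⁻¹ := by
  obtain ⟨F, hF⟩ := hf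
  -- The `max` with `1/(n+1)` keeps the denominators away from `0`; in the limit it is `f²`,
  -- so the quotients tend to `f / f² = f⁻¹`.
  have hpos (n : ℕ) (x : X) : 0 < max (F n x ^ 2) (1 / (n + 1)) :=
    lt_max_of_lt_right (by positivity)
  refine ⟨fun n => ⟨fun x => F n x / max (F n x ^ 2) (1 / (n + 1)),
    (F n).continuous.div ((F n).continuous.pow 2 |>.max continuous_const)
      fun x => (hpos n x).ne'⟩, fun x => ?_⟩
  have hden : Tendsto (fun n : ℕ => max (F n x ^ 2) (1 / (n + 1))) atTop (𝓝 (f x ^ 2)) := by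
    simpa [max_eq_left (sq_nonneg (f x))] using
      ((hF x).pow 2).max tendsto_one_div_add_atTop_nhds_zero_nat
  have hlim := (hF x).div hden (pow_ne_zero 2 (h0 x))
  rwa [pow_two, div_mul_cancel_left₀ (h0 x), ← Pi.inv_apply] at hlim

theorem isUnit_of_zset_eq_empty {f : B1 X} (hf : zset f = ∅) : IsUnit f := by
  have h0 : ∀ x, (f : X → ℝ) x ≠ 0 := fun x hx => (hf ▸ hx : x ∈ (∅ : Set X))
  exact IsUnit.of_mul_eq_one ⟨_, IsBaireOne.inv f.2 h0⟩
    (Subtype.ext (funext fun x => mul_inv_cancel₀ (h0 x)))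

theorem zset_mul (f g : B1 X) : zset (f * g) = zset f ∪ zset g := by
  ext x
  simp [zset]

theorem zset_mul_self_add_mul_self (f g : B1 X) : zset (f * f + g * g) = zset f ∩ zset g := by
  ext x
  simp [zset, mul_self_add_mul_self_eq_zero]

/-- If `I` is a proper ideal of `B₁(X)` then `Z_B[I]` is a `Z_B`-filter on `X`. -/
theorem zbi_isZBFilter {X : Type*} [TopologicalSpace X]
    (I : Ideal (B1 X)) (hI : I ≠ ⊤) : IsZBFilter (zbi I) := by
  refine ⟨⟨zset 0, 0, I.zero_mem, rfl⟩, ?_, ?_, ?_, ?_⟩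
  · rintro _ ⟨f, -, rfl⟩
    exact ⟨f, rfl⟩
  · rintro ⟨f, hfI, hf⟩
    exact hI (I.eq_top_of_isUnit_mem hfI (isUnit_of_zset_eq_empty hf))
  · rintro _ ⟨f, hf, rfl⟩ _ ⟨g, hg, rfl⟩
    exact ⟨f * f + g * g, I.add_mem (I.mul_mem_left f hf) (I.mul_mem_left g hg),
      zset_mul_self_add_mul_self f g⟩
  · rintro _ ⟨f, hf, rfl⟩ _ ⟨g, rfl⟩ hfg
    exact ⟨g * f, I.mul_mem_left g hf, by rw [zset_mul, Set.union_eq_left.mpr hfg]⟩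
end

section
/- If ℱ is a Z_B-filter on X, then Z_B⁻¹[ℱ] = {f ∈ B₁(X) : Z(f) ∈ ℱ} is a proper ideal in B₁(X). -/
open Filter Topology

variable {X : Type*} [TopologicalSpace X]

/-- If `ℱ` is a `Z_B`-filter on `X` then `Z_B⁻¹[ℱ]` is a proper ideal of `B₁(X)`. -/
theorem zbinv_isIdeal {X : Type*} [TopologicalSpace X]
    (F : Set (Set X)) (hF : IsZBFilter F) :
    ∃ I : Ideal (B1 X), I ≠ ⊤ ∧ (I : Set (B1 X)) = {f : B1 X | zset f ∈ F} := by
  obtain ⟨hne, hsub, hemp, hinter, hup⟩ := hF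
  refine ⟨{ carrier := {f : B1 X | zset f ∈ F}
            zero_mem' := ?_
            add_mem' := ?_
            smul_mem' := ?_ }, ?_, rfl⟩
  · intro a b ha hb
    refine hup _ (hinter _ ha _ hb) _ ⟨a + b, rfl⟩ ?_
    rintro x ⟨hxa, hxb⟩
    simp only [zset, Set.mem_setOf_eq] at *
    show (a : X → ℝ) x + (b : X → ℝ) x = 0
    rw [hxa, hxb]; ring
  · obtain ⟨Z, hZ⟩ := hne
    have : (Set.univ : Set X) ∈ F := by
      refine hup Z hZ Set.univ ⟨0, ?_⟩ (Set.subset_univ _)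
      · ext x; simp [zset]
    simpa [zset, Set.eq_univ_iff_forall] using this
  · intro c a ha
    refine hup _ ha _ ⟨c • a, rfl⟩ ?_
    intro x hx
    simp only [zset, Set.mem_setOf_eq] at *
    show (c : X → ℝ) x * (a : X → ℝ) x = 0
    rw [hx]; ring
  · intro h
    have h1 : zset (1 : B1 X) ∈ F := by
      have : (1 : B1 X) ∈ (⊤ : Ideal (B1 X)) := trivial
      rw [← h] at this; exact this
    apply hemp
    have : zset (1 : B1 X) = ∅ := by ext x; simp [zset]
    rwa [this] at h1
end

section
/- For every point p of a topological space X, the set M̂_p = {f ∈ B₁(X) : f(p) = 0} is a fixed maximal ideal of B₁(X), and the quotient B₁(X)/M̂_p is isomorphic to ℝ. Moreover, every fixed maximal ideal of B₁(X) equals M̂_p for some p ∈ X. -/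
open Filter Topology

variable {X : Type*} [TopologicalSpace X]

/-- Evaluation at a point as a ring hom `B₁(X) →+* ℝ`. -/
def evB1 (p : X) : B1 X →+* ℝ where
  toFun f := (f : X → ℝ) p
  map_one' := rfl
  map_mul' _ _ := rfl
  map_zero' := rfl
  map_add' _ _ := rfl

theorem evB1_surjective (p : X) : Function.Surjective (evB1 (X := X) p) :=
  fun r => ⟨bconst X r, rfl⟩

/-- For each `p ∈ X`, `M̂_p = {f ∈ B₁(X) : f(p) = 0}` is a fixed maximal ideal of
`B₁(X)` with `B₁(X)/M̂_p ≅ ℝ`, and every fixed maximal ideal of `B₁(X)` is of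
this form. -/
theorem fixed_maximal_ideals {X : Type*} [TopologicalSpace X] (p : X) :
    ∃ Mp : Ideal (B1 X),
      (Mp : Set (B1 X)) = {f : B1 X | (f : X → ℝ) p = 0} ∧
      Mp.IsMaximal ∧ FixedIdeal Mp ∧ Nonempty ((B1 X ⧸ Mp) ≃+* ℝ) ∧
      ∀ M : Ideal (B1 X), M.IsMaximal → FixedIdeal M →
        ∃ q : X, (M : Set (B1 X)) = {f : B1 X | (f : X → ℝ) q = 0} := by
  classical
  refine ⟨RingHom.ker (evB1 p), rfl, ?_, ?_, ?_, ?_⟩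
  · exact RingHom.ker_isMaximal_of_surjective _ (evB1_surjective p)
  · exact ⟨p, Set.mem_iInter₂.2 fun f hf => hf⟩
  · exact ⟨RingHom.quotientKerEquivOfSurjective (evB1_surjective p)⟩
  · intro M hM hMfix
    obtain ⟨q, hq⟩ := hMfix
    refine ⟨q, ?_⟩
    have hle : M ≤ RingHom.ker (evB1 q) := fun f hf => Set.mem_iInter₂.1 hq f hf
    have : M = RingHom.ker (evB1 q) :=
      (hM.eq_of_le (RingHom.ker_isMaximal_of_surjective _ (evB1_surjective q)).ne_top hle)
    rw [this]; rfl
end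

section
/- Let I be an ideal of B₁(X) such that I ∩ B₁*(X) is a fixed ideal of B₁*(X). Then I is a fixed ideal of B₁(X). -/
open Filter Topology

variable {X : Type*} [TopologicalSpace X]

/-- If `I` is an ideal of `B₁(X)` whose trace on the bounded functions
`B₁*(X)` is fixed, then `I` is a fixed ideal of `B₁(X)`. -/
theorem fixed_of_bounded_trace_fixed {X : Type*} [TopologicalSpace X]
    (I : Ideal (B1 X))
    (h : (⋂ f ∈ {g : B1 X | g ∈ I ∧ ∃ B : ℝ, ∀ x, |(g : X → ℝ) x| ≤ B},
            zset f).Nonempty) :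
    FixedIdeal I := by
  obtain ⟨x, hx⟩ := h
  refine ⟨x, ?_⟩
  simp only [Set.mem_iInter, SetLike.mem_coe]
  intro f hf
  -- the unit u = 1/(1+f^2) is Baire one
  have humem : (fun y => 1 / (1 + ((f : X → ℝ) y) ^ 2)) ∈ B1 X := by
    obtain ⟨F, hF⟩ := f.2
    refine ⟨fun n => ⟨fun y => 1 / (1 + (F n y) ^ 2), ?_⟩, fun y => ?_⟩
    · exact continuous_const.div (continuous_const.add ((F n).continuous.pow 2)) (fun y => by positivity)
    · exact tendsto_const_nhds.div (tendsto_const_nhds.add ((hF y).pow 2))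
        (by positivity)
  set u : B1 X := ⟨_, humem⟩ with hu
  have hg : u * f ∈ I := I.mul_mem_left u hf
  have hgb : ∃ B : ℝ, ∀ y, |((u * f : B1 X) : X → ℝ) y| ≤ B := by
    refine ⟨1, fun y => ?_⟩
    show |1 / (1 + ((f : X → ℝ) y) ^ 2) * (f : X → ℝ) y| ≤ 1
    rw [abs_mul, abs_div, abs_one, abs_of_pos (by positivity :
      (0:ℝ) < 1 + ((f : X → ℝ) y) ^ 2), div_mul_eq_mul_div, one_mul,
      div_le_one (by positivity)]
    nlinarith [abs_nonneg ((f : X → ℝ) y), sq_abs ((f : X → ℝ) y)]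
  have hxz : x ∈ zset (u * f) := by
    have := Set.mem_iInter.mp hx (u * f)
    exact Set.mem_iInter.mp (this) ⟨hg, hgb⟩
  have : 1 / (1 + ((f : X → ℝ) x) ^ 2) * (f : X → ℝ) x = 0 := hxz
  have hne : 1 / (1 + ((f : X → ℝ) x) ^ 2) ≠ 0 := by positivity
  exact (mul_eq_zero.mp this).resolve_left hne
end

section
/- Let X be an infinite perfectly normal T₁ space. Then I = {f ∈ B₁(X) : the closure of X \ Z(f) is finite} is a proper nonzero free ideal of B₁(X); in particular B₁(X) possesses a free ideal. -/
open Filter Topology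

variable {X : Type*} [TopologicalSpace X]

open Classical in
lemma chi_baire_one {X : Type*} [TopologicalSpace X] [PerfectlyNormalSpace X] [T1Space X]
    (p : X) : IsBaireOne (fun x => if x = p then (1:ℝ) else 0) := by
  obtain ⟨U, Uopen, hU⟩ :=
    (PerfectlyNormalSpace.closed_gdelta (isClosed_singleton (x := p))).eq_iInter_nat
  set V : ℕ → Set X := fun n => ⋂ i ∈ Finset.range (n+1), U i with hV
  have Vopen : ∀ n, IsOpen (V n) := fun n => isOpen_biInter_finset fun i _ => Uopen i
  have pV : ∀ n, p ∈ V n := by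
    intro n
    simp only [hV, Set.mem_iInter]
    intro i _
    have : p ∈ ⋂ n, U n := hU ▸ rfl
    exact Set.mem_iInter.mp this i
  have key : ∀ n, ∃ f : C(X, ℝ), Set.EqOn f 0 (V n)ᶜ ∧ Set.EqOn f 1 {p} := by
    intro n
    obtain ⟨f, h0, h1, -⟩ := exists_continuous_zero_one_of_isClosed
      (Vopen n).isClosed_compl isClosed_singleton
      (by simpa [Set.disjoint_singleton_right] using pV n)
    exact ⟨f, h0, h1⟩
  choose f hf0 hf1 using key
  refine ⟨f, fun x => ?_⟩
  by_cases hx : x = p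
  · subst hx
    simp only [if_pos rfl]
    have : ∀ n, f n x = 1 := fun n => hf1 n rfl
    simpa [this] using tendsto_const_nhds (α := ℝ)
  · simp only [if_neg hx]
    have : x ∉ ⋂ n, U n := by
      rw [← hU]; simpa using hx
    obtain ⟨m, hm⟩ := by simpa using this
    apply tendsto_atTop_of_eventually_const (i₀ := m)
    intro n hn
    apply hf0 n
    simp only [hV, Set.mem_compl_iff, Set.mem_iInter, not_forall]
    exact ⟨m, by simp [Finset.mem_range]; omega, hm⟩

/-- If `X` is an infinite perfectly normal `T₁` space then
`I = {f ∈ B₁(X) : closure (X \ Z(f)) is finite}` is a proper nonzero free ideal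
of `B₁(X)`; in particular `B₁(X)` has a free ideal. -/
theorem exists_free_ideal {X : Type*} [TopologicalSpace X]
    [PerfectlyNormalSpace X] [T1Space X] [Infinite X] :
    ∃ I : Ideal (B1 X),
      (I : Set (B1 X)) = {f : B1 X | (closure ((zset f)ᶜ)).Finite} ∧
      I ≠ ⊥ ∧ I ≠ ⊤ ∧ ¬ FixedIdeal I := by
  classical
  let chi : X → B1 X := fun p => ⟨fun x => if x = p then 1 else 0, chi_baire_one p⟩
  have hchiz : ∀ p : X, zset (chi p) = {p}ᶜ := by
    intro p
    ext x
    simp only [zset, chi, Set.mem_setOf_eq, Set.mem_compl_iff, Set.mem_singleton_iff]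
    by_cases hx : x = p <;> simp [hx]
  have hchiI : ∀ p : X, (closure ((zset (chi p))ᶜ)).Finite := by
    intro p
    rw [hchiz, compl_compl, closure_singleton]
    exact Set.finite_singleton p
  set I : Ideal (B1 X) :=
    { carrier := {f : B1 X | (closure ((zset f)ᶜ)).Finite}
      add_mem' := by
        intro a b ha hb
        refine ((ha.union hb).subset ?_)
        rw [← closure_union]
        apply closure_mono
        intro x hx
        simp only [Set.mem_compl_iff, zset, Set.mem_setOf_eq, Set.mem_union] at hx ⊢
        by_contra h
        push_neg at h
        have he : ((a + b : B1 X) : X → ℝ) x = (a : X → ℝ) x + (b : X → ℝ) x := rfl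
        rw [he, h.1, h.2] at hx
        simp at hx
      zero_mem' := by
        have : zset (0 : B1 X) = Set.univ := by
          ext x
          simp only [zset, Set.mem_setOf_eq, Set.mem_univ, iff_true]
          rfl
        simp [Set.mem_setOf_eq, this]
      smul_mem' := by
        intro c x hx
        refine hx.subset (closure_mono ?_)
        intro y hy
        simp only [Set.mem_compl_iff, zset, Set.mem_setOf_eq] at hy ⊢
        intro h
        have he : ((c • x : B1 X) : X → ℝ) y = (c : X → ℝ) y * (x : X → ℝ) y := rfl
        rw [he, h, mul_zero] at hy
        exact hy rfl } with hI
  refine ⟨I, rfl, ?_, ?_, ?_⟩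
  · -- I ≠ ⊥
    obtain ⟨p⟩ : Nonempty X := inferInstance
    intro h
    have hmem : chi p ∈ I := hchiI p
    rw [h] at hmem
    have h0 : chi p = 0 := by simpa using hmem
    have h1 : ((chi p : B1 X) : X → ℝ) p = 1 := by simp [chi]
    rw [h0] at h1
    norm_num at h1
  · -- I ≠ ⊤
    intro h
    have hmem : (1 : B1 X) ∈ I := by rw [h]; trivial
    have hfin : (closure ((zset (1 : B1 X))ᶜ)).Finite := hmem
    have hz : zset (1 : B1 X) = ∅ := by
      ext x
      simp only [zset, Set.mem_setOf_eq, Set.mem_empty_iff_false, iff_false]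
      exact one_ne_zero
    rw [hz, Set.compl_empty, closure_univ] at hfin
    exact Set.infinite_univ hfin
  · -- not fixed
    rintro ⟨x, hx⟩
    simp only [Set.mem_iInter] at hx
    have : x ∈ zset (chi x) := hx (chi x) (hchiI x)
    rw [hchiz] at this
    exact this rfl
end

section
/- For a maximal ideal M of B₁(X) and f ∈ B₁(X), the following are equivalent: (1) |M(f)| is an infinitely large element of the totally ordered field B₁(X)/M (i.e., |M(f)| > M(n) for every natural number n, where n denotes the constant function); (2) f is unbounded on every zero set belonging to Z_B[M]; (3) for every n ∈ ℕ, the set Z_n = {x ∈ X : |f(x)| ≥ n} belongs to Z_B[M]. -/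
open Filter Topology

variable {X : Type*} [TopologicalSpace X]

/-! The zero sets of two members `a, b` of a proper ideal of `B₁(X)` meet, since `a² + b²`
vanishes exactly on `Z(a) ∩ Z(b)` and a Baire one function without zeros is invertible.
Conversely, for a maximal ideal `M`, a function whose zero set meets every member of `Z_B[M]`
lies in `M` (otherwise `a g + m = 1` for some `m ∈ M`). Hence `M(h) ≥ 0` iff `h ≥ 0` on a member
of `Z_B[M]`, the positive part `h ∨ 0` witnessing one direction. Applied to `h = |f| - n`, this
turns each of the three conditions into a statement about the sets `Z_n` and the members of
`Z_B[M]` that meet them. -/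

theorem IsBaireOne.inv_s18 {X : Type*} [TopologicalSpace X] {f : X → ℝ} (hf : IsBaireOne f)
    (hf0 : ∀ x, f x ≠ 0) : IsBaireOne fun x => (f x)⁻¹ := by
  obtain ⟨F, hF⟩ := hf
  -- `t ↦ t / (t ^ 2 + ε)` is continuous on all of `ℝ` and tends to `t⁻¹` as `ε → 0` when `t ≠ 0`.
  refine ⟨fun n => ⟨fun x => F n x / (F n x ^ 2 + 1 / (n + 1)),
    (F n).continuous.div (((F n).continuous.pow 2).add continuous_const) fun x =>
      (by positivity : (0 : ℝ) < F n x ^ 2 + 1 / (n + 1)).ne'⟩,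
    fun x => ?_⟩
  have hlim := (hF x).div (((hF x).pow 2).add tendsto_one_div_add_atTop_nhds_zero_nat)
    (by simpa using hf0 x)
  rw [add_zero, sq, div_mul_cancel_left₀ (hf0 x)] at hlim
  exact hlim

theorem IsBaireOne.max {X : Type*} [TopologicalSpace X] {f g : X → ℝ} (hf : IsBaireOne f)
    (hg : IsBaireOne g) : IsBaireOne fun x => max (f x) (g x) := by
  obtain ⟨F, hF⟩ := hf
  obtain ⟨G, hG⟩ := hg
  exact ⟨fun n => ⟨fun x => Max.max (F n x) (G n x), (F n).continuous.max (G n).continuous⟩,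
    fun x => (hF x).max (hG x)⟩

namespace B1

variable {X : Type*} [TopologicalSpace X]

@[simp]
theorem coe_natCast (n : ℕ) : ((n : B1 X) : X → ℝ) = fun _ => (n : ℝ) :=
  map_natCast (B1 X).subtype n

@[simp]
theorem coe_babs (f : B1 X) : (babs f : X → ℝ) = fun x => |(f : X → ℝ) x| := rfl

def posPart (f : B1 X) : B1 X :=
  ⟨fun x => max ((f : X → ℝ) x) 0, f.2.max (B1 X).zero_mem⟩

@[simp]
theorem coe_posPart (f : B1 X) : (posPart f : X → ℝ) = fun x => max ((f : X → ℝ) x) 0 := rfl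

theorem zset_posPart_sub (g h : B1 X) :
    zset (posPart (g - h)) = {x | (g : X → ℝ) x ≤ (h : X → ℝ) x} := by
  ext x
  simp [zset]

theorem isUnit_of_forall_ne_zero {u : B1 X} (hu : ∀ x, (u : X → ℝ) x ≠ 0) : IsUnit u :=
  IsUnit.of_mul_eq_one (b := ⟨_, u.2.inv_s18 hu⟩) <| Subtype.ext <| funext fun x => mul_inv_cancel₀ (hu x)

theorem zset_mul_self_add_mul_self (a b : B1 X) : zset (a * a + b * b) = zset a ∩ zset b := by
  ext x
  simp only [zset, Set.mem_inter_iff, Subring.coe_add, Subring.coe_mul,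
    Pi.add_apply, Pi.mul_apply]
  exact mul_self_add_mul_self_eq_zero

theorem inter_zset_nonempty {I : Ideal (B1 X)} (hI : I ≠ ⊤) {a b : B1 X} (ha : a ∈ I)
    (hb : b ∈ I) : (zset a ∩ zset b).Nonempty := by
  by_contra hempty
  have hunit : IsUnit (a * a + b * b) := isUnit_of_forall_ne_zero fun x hx =>
    hempty ⟨x, by rw [← zset_mul_self_add_mul_self]; exact hx⟩
  exact hI <| Ideal.eq_top_of_isUnit_mem I
    (add_mem (I.mul_mem_left a ha) (I.mul_mem_left b hb)) hunit

theorem mem_of_forall_inter_zset_nonempty {M : Ideal (B1 X)} (hM : M.IsMaximal) {g : B1 X}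
    (hg : ∀ m ∈ M, (zset g ∩ zset m).Nonempty) : g ∈ M := by
  by_contra hgM
  obtain ⟨a, m, hm, hsum⟩ := hM.exists_inv hgM
  obtain ⟨x, hgx, hmx⟩ := hg m hm
  have hx : (a : X → ℝ) x * (g : X → ℝ) x + (m : X → ℝ) x = 1 :=
    congrFun (congrArg Subtype.val hsum) x
  norm_num [show (g : X → ℝ) x = 0 from hgx, show (m : X → ℝ) x = 0 from hmx] at hx

theorem mem_of_zset_subset {M : Ideal (B1 X)} (hM : M.IsMaximal) {g m : B1 X} (hm : m ∈ M)
    (hsub : zset m ⊆ zset g) : g ∈ M :=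
  mem_of_forall_inter_zset_nonempty hM fun _ hm' =>
    (inter_zset_nonempty hM.ne_top hm hm').mono (Set.inter_subset_inter_left _ hsub)

theorem qNonneg_mk_iff {M : Ideal (B1 X)} (hM : M.IsMaximal) (h : B1 X) :
    QNonneg M (Ideal.Quotient.mk M h) ↔ ∃ Z ∈ zbi M, ∀ x ∈ Z, 0 ≤ (h : X → ℝ) x := by
  constructor
  · rintro ⟨k, hk, hkh⟩
    refine ⟨_, ⟨k - h, Ideal.Quotient.eq.mp hkh, rfl⟩, fun x hx => ?_⟩
    have hx : (k : X → ℝ) x - (h : X → ℝ) x = 0 := hx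
    linarith [hk x]
  · rintro ⟨_, ⟨m, hm, rfl⟩, hmh⟩
    refine ⟨posPart h, fun x => le_max_right _ _, Ideal.Quotient.eq.mpr ?_⟩
    refine mem_of_zset_subset hM hm fun x hx => ?_
    show max ((h : X → ℝ) x) 0 - (h : X → ℝ) x = 0
    rw [max_eq_left (hmh x hx), sub_self]

end B1

open B1

/-- For a maximal ideal `M` of `B₁(X)` and `f ∈ B₁(X)` the following are
equivalent: `|M(f)|` is infinitely large in `B₁(X)/M` (i.e. `M(|f|) > M(n)` for
every `n ∈ ℕ`); `f` is unbounded on every member of `Z_B[M]`; for every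
`n ∈ ℕ`, `Z_n = {x : |f(x)| ≥ n}` belongs to `Z_B[M]`. -/
theorem infinitely_large_tfae {X : Type*} [TopologicalSpace X]
    (M : Ideal (B1 X)) (hM : M.IsMaximal) (f : B1 X) :
    [∀ n : ℕ, QPos M (Ideal.Quotient.mk M (babs f - (n : B1 X))),
     ∀ Z ∈ zbi M, ¬ ∃ B : ℝ, ∀ x ∈ Z, |(f : X → ℝ) x| ≤ B,
     ∀ n : ℕ, {x : X | (n : ℝ) ≤ |(f : X → ℝ) x|} ∈ zbi M].TFAE := by
  have coe_babs_sub (n : ℕ) (x : X) :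
      ((babs f - (n : B1 X) : B1 X) : X → ℝ) x = |(f : X → ℝ) x| - n := by
    simp
  tfae_have 1 → 2 := by
    rintro h1 _ ⟨m, hm, rfl⟩ ⟨B, hB⟩
    obtain ⟨n, hBn⟩ := exists_nat_gt B
    obtain ⟨_, ⟨_, hm', rfl⟩, hfn⟩ := (qNonneg_mk_iff hM _).mp (h1 n).1
    obtain ⟨x, hxm, hxm'⟩ := inter_zset_nonempty hM.ne_top hm hm'
    linarith [hB x hxm, coe_babs_sub n x ▸ hfn x hxm']
  tfae_have 2 → 3 := by
    intro h2 n
    refine ⟨posPart (n - babs f), mem_of_forall_inter_zset_nonempty hM fun m hm => ?_, ?_⟩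
    · have hunb := h2 _ ⟨m, hm, rfl⟩
      simp only [not_exists, not_forall, not_le] at hunb
      obtain ⟨x, hxm, hfx⟩ := hunb n
      exact ⟨x, by simpa [zset_posPart_sub] using hfx.le, hxm⟩
    · ext x
      simp [zset_posPart_sub]
  tfae_have 3 → 1 := by
    intro h3 n
    obtain ⟨g, hg, hgz⟩ := h3 (n + 1)
    have hfg (x : X) (hx : x ∈ zset g) : (n : ℝ) + 1 ≤ |(f : X → ℝ) x| := by
      rw [hgz] at hx
      exact_mod_cast hx
    refine ⟨(qNonneg_mk_iff hM _).mpr ⟨_, ⟨g, hg, rfl⟩, fun x hx => ?_⟩, fun h0 => ?_⟩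
    · linarith [coe_babs_sub n x, hfg x hx]
    · obtain ⟨x, hx0, hxg⟩ :=
        inter_zset_nonempty hM.ne_top (Ideal.Quotient.eq_zero_iff_mem.mp h0) hg
      have hx0 : ((babs f - (n : B1 X) : B1 X) : X → ℝ) x = 0 := hx0
      linarith [coe_babs_sub n x, hfg x hxg]
  tfae_finish
end
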